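/- Let τ_0, τ_1, τ_2 ≥ 0 with τ_0 + τ_1 + τ_2 = 1, and define y = Δ^3 whose digit string is the concatenation over n = 1, 2, 3, ... of blocks consisting of ⌊τ_0·n⌋ zeros, then ⌊τ_1·n⌋ ones, then ⌊τ_2·n⌋ twos. Then the ternary digit frequencies of y exist and ν_i(y) = τ_i for i = 0, 1, 2. -/

import Mathlib

open Filter Finset

/-- The `k`-th canonical `s`-adic digit of `x` (positions indexed from 1),
using the expansion not ending in all `(s-1)`'s. -/
noncomputable def sadicDigit (s : ℕ) (x : ℝ) (k : ℕ) : ℕ := ⌊x * (s : ℝ) ^ k⌋.toNat % s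

/-- `N_i(x,n)`: the number of occurrences of digit `i` among the first `n` digits of `x`. -/
noncomputable def countDigit (s : ℕ) (x : ℝ) (i n : ℕ) : ℕ :=
  ((Finset.Icc 1 n).filter (fun j => sadicDigit s x j = i)).card

/-- The frequency of digit `i` in the `s`-adic expansion of `x` exists and equals `ν`. -/
def hasFreq (s : ℕ) (x : ℝ) (i : ℕ) (ν : ℝ) : Prop :=
  Tendsto (fun n : ℕ => (countDigit s x i n : ℝ) / n) atTop (nhds ν)

/-- The asymptotic mean of the digits of the `s`-adic expansion of `x` exists and equals `r`. -/
def hasMean (s : ℕ) (x : ℝ) (r : ℝ) : Prop :=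
  Tendsto (fun n : ℕ => (∑ k ∈ Finset.Icc 1 n, (sadicDigit s x k : ℝ)) / n) atTop (nhds r)

lemma sum_Icc_cast_aux (n : ℕ) : ∑ j ∈ Finset.Icc 1 n, (j:ℝ) = n*(n+1)/2 := by
  induction n with
  | zero => simp
  | succ n ih =>
    rw [Finset.sum_Icc_succ_top (by omega : 1 ≤ n + 1), ih]
    push_cast; ring

lemma toNat_floor_cast_aux (τ : ℝ) (hτ : 0 ≤ τ) (j : ℕ) :
    ((⌊τ * j⌋.toNat : ℕ) : ℝ) = (⌊τ * j⌋ : ℝ) := by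
  have h : (0:ℝ) ≤ τ * j := mul_nonneg hτ (Nat.cast_nonneg j)
  have h2 : 0 ≤ ⌊τ * (j:ℝ)⌋ := Int.floor_nonneg.2 h
  exact_mod_cast congrArg (fun z : ℤ => (z : ℝ)) (Int.toNat_of_nonneg h2)

lemma freq_aux (τ : ℝ) (hτ0 : 0 ≤ τ) (hτ1 : τ ≤ 1)
    (S : ℕ → ℕ) (hSmono : Monotone S) (hS0 : S 0 = 0)
    (hSlb : ∀ n : ℕ, (n:ℝ)*((n:ℝ)+1)/2 - 3*n ≤ S n)
    (hSub : ∀ n : ℕ, (S n : ℝ) ≤ (n:ℝ)*((n:ℝ)+1)/2)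
    (count : ℕ → ℕ) (hcmono : Monotone count)
    (F : ℕ → ℕ) (hcF : ∀ n, count (S n) = F n)
    (hFlb : ∀ n : ℕ, τ*((n:ℝ)*((n:ℝ)+1)/2) - n ≤ F n)
    (hFub : ∀ n : ℕ, (F n : ℝ) ≤ τ*((n:ℝ)*((n:ℝ)+1)/2)) :
    Tendsto (fun m : ℕ => (count m : ℝ)/m) atTop (nhds τ) := by
  rw [Metric.tendsto_atTop]
  intro ε hε
  obtain ⟨n₀, hn₀⟩ := exists_nat_gt (max 100 (100/ε))
  have hn₀1 : (100:ℝ) < n₀ := lt_of_le_of_lt (le_max_left _ _) hn₀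
  have hn₀2 : 100 < ε * n₀ := by
    have : 100/ε < n₀ := lt_of_le_of_lt (le_max_right _ _) hn₀
    rw [div_lt_iff₀ hε] at this; linarith [this]
  have hex : ∀ m : ℕ, ∃ n, m ≤ S n := by
    intro m
    refine ⟨m + 7, ?_⟩
    have h := hSlb (m+7)
    have h2 : (m:ℝ) ≤ S (m+7) := by push_cast at h ⊢; nlinarith
    exact_mod_cast h2
  refine ⟨S n₀ + 1, fun m hm => ?_⟩
  obtain ⟨n, h1, hmin⟩ : ∃ n, m ≤ S n ∧ ∀ k, k < n → ¬ (m ≤ S k) :=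
    ⟨Nat.find (hex m), Nat.find_spec (hex m), fun k hk => Nat.find_min (hex m) hk⟩
  have hmpos : 1 ≤ m := by
    have : 0 ≤ S n₀ := Nat.zero_le _
    omega
  have hnpos : 1 ≤ n := by
    rcases Nat.eq_zero_or_pos n with h | h
    · rw [h, hS0] at h1; omega
    · exact h
  have h2 : S (n-1) < m := by
    have := hmin (n-1) (by omega)
    omega
  have hn0n : n₀ < n := by
    by_contra hcon
    push_neg at hcon
    have := hSmono hcon
    omega
  -- real versions
  set N : ℝ := (n : ℝ) with hNdef
  have hN : (101:ℝ) ≤ N := by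
    have h' : ((n₀ + 1 : ℕ) : ℝ) ≤ (n:ℝ) := Nat.cast_le.2 hn0n
    push_cast at h'
    linarith
  have hεN : 100 < ε * N := by
    have h' : (n₀:ℝ) ≤ N := by
      have : ((n₀:ℕ):ℝ) ≤ (n:ℝ) := Nat.cast_le.2 hn0n.le
      linarith [this]
    have := mul_le_mul_of_nonneg_left h' hε.le
    linarith
  have hcast : ((n - 1 : ℕ) : ℝ) = N - 1 := by
    push_cast [Nat.cast_sub hnpos]; ring
  have hub : (count m : ℝ) ≤ F n := by
    have : count m ≤ F n := (hcF n) ▸ hcmono h1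
    exact_mod_cast this
  have hlb : (F (n-1) : ℝ) ≤ count m := by
    have : F (n-1) ≤ count m := (hcF (n-1)) ▸ hcmono h2.le
    exact_mod_cast this
  have hmub : (m : ℝ) ≤ N*(N+1)/2 := by
    have := hSub n
    have h' : (m:ℝ) ≤ S n := by exact_mod_cast h1
    linarith
  have hmlb : (N-1)*N/2 - 3*(N-1) < m := by
    have h' := hSlb (n-1)
    rw [hcast] at h'
    have h'' : ((S (n-1) : ℕ) : ℝ) < m := by exact_mod_cast h2
    linarith
  have hmpos' : (0:ℝ) < m := by
    have hpos := mul_pos (show (0:ℝ) < N-1 by linarith) (show (0:ℝ) < N-6 by linarith)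
    nlinarith [hmlb]
  have hεm : 4*N < ε * m := by
    have e1 := mul_lt_mul_of_pos_left hmlb hε
    have e2 : 0 ≤ (ε*N - 100) * (N - 7) :=
      mul_nonneg (by linarith) (by linarith)
    nlinarith [e1, e2, hε.le, hN]
  have hFubn := hFub n
  have hFlbn := hFlb (n-1)
  rw [hcast] at hFlbn
  have hτm_ub : τ * (m:ℝ) ≤ τ * (N*(N+1)/2) := mul_le_mul_of_nonneg_left hmub hτ0
  have hτm_lb : τ * ((N-1)*N/2 - 3*(N-1)) ≤ τ * m := mul_le_mul_of_nonneg_left hmlb.le hτ0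
  have hτN : τ * N ≤ N := by
    have := mul_le_mul_of_nonneg_right hτ1 (show (0:ℝ) ≤ N by linarith)
    linarith
  have hτNpos : 0 ≤ τ * N := mul_nonneg hτ0 (by linarith)
  have key : |(count m : ℝ) - τ * m| < ε * m := by
    rw [abs_lt]
    constructor
    · linarith [hlb, hFlbn, hτm_ub, hτN, hεm]
    · linarith [hub, hFubn, hτm_lb, hτN, hτNpos, hεm, hτ0]
  rw [Real.dist_eq]
  have heq : (count m:ℝ)/m - τ = ((count m:ℝ) - τ*m)/m := by field_simp
  rw [heq, abs_div, abs_of_pos hmpos']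
  rw [div_lt_iff₀ hmpos']
  linarith [key]

/-- Let `τ₀, τ₁, τ₂ ≥ 0` with `τ₀ + τ₁ + τ₂ = 1`, and let `y` be the number whose
ternary digit string is the concatenation over `n = 1, 2, …` of `⌊τ₀·n⌋` zeros,
`⌊τ₁·n⌋` ones and `⌊τ₂·n⌋` twos. Then the digit frequencies of `y` exist and
`ν_i(y) = τ_i`.  Here `S n` is the total length of the first `n` blocks. -/
theorem block_number_freqs (τ₀ τ₁ τ₂ : ℝ) (h0 : 0 ≤ τ₀) (h1 : 0 ≤ τ₁) (h2 : 0 ≤ τ₂)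
    (hsum : τ₀ + τ₁ + τ₂ = 1) (y : ℝ) (hy : y ∈ Set.Ico (0 : ℝ) 1)
    (S : ℕ → ℕ)
    (hS : ∀ n, S n = ∑ j ∈ Finset.Icc 1 n,
      (⌊τ₀ * j⌋.toNat + ⌊τ₁ * j⌋.toNat + ⌊τ₂ * j⌋.toNat))
    (hdig : ∀ n, 1 ≤ n → ∀ m, S (n - 1) < m → m ≤ S n →
      sadicDigit 3 y m =
        if m ≤ S (n - 1) + ⌊τ₀ * n⌋.toNat then 0
        else if m ≤ S (n - 1) + ⌊τ₀ * n⌋.toNat + ⌊τ₁ * n⌋.toNat then 1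
        else 2) :
    hasFreq 3 y 0 τ₀ ∧ hasFreq 3 y 1 τ₁ ∧ hasFreq 3 y 2 τ₂ := by
  have hτ0le : τ₀ ≤ 1 := by linarith
  have hτ1le : τ₁ ≤ 1 := by linarith
  have hτ2le : τ₂ ≤ 1 := by linarith
  have hS0 : S 0 = 0 := by rw [hS]; simp
  have hSstep : ∀ n : ℕ, S (n+1) = S n +
      (⌊τ₀ * ((n+1:ℕ):ℝ)⌋.toNat + ⌊τ₁ * ((n+1:ℕ):ℝ)⌋.toNat + ⌊τ₂ * ((n+1:ℕ):ℝ)⌋.toNat) := by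
    intro n
    rw [hS, hS, Finset.sum_Icc_succ_top (by omega : 1 ≤ n + 1)]
  have hSmono : Monotone S := by
    intro p q hpq
    rw [hS, hS]
    exact Finset.sum_le_sum_of_subset (Finset.Icc_subset_Icc_right hpq)
  have hcmono : ∀ i, Monotone (fun m => countDigit 3 y i m) := by
    intro i p q hpq
    exact Finset.card_le_card (Finset.filter_subset_filter _ (Finset.Icc_subset_Icc_right hpq))
  -- counting digits up to the end of block `n`
  have hcount : ∀ n : ℕ,
      countDigit 3 y 0 (S n) = ∑ j ∈ Finset.Icc 1 n, ⌊τ₀ * j⌋.toNat ∧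
      countDigit 3 y 1 (S n) = ∑ j ∈ Finset.Icc 1 n, ⌊τ₁ * j⌋.toNat ∧
      countDigit 3 y 2 (S n) = ∑ j ∈ Finset.Icc 1 n, ⌊τ₂ * j⌋.toNat := by
    intro n
    induction n with
    | zero => simp [hS0, countDigit]
    | succ n ih =>
      obtain ⟨ih0, ih1, ih2⟩ := ih
      set a := ⌊τ₀ * ((n+1:ℕ):ℝ)⌋.toNat with ha
      set b := ⌊τ₁ * ((n+1:ℕ):ℝ)⌋.toNat with hb
      set c := ⌊τ₂ * ((n+1:ℕ):ℝ)⌋.toNat with hc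
      have hstep : S (n+1) = S n + (a + b + c) := hSstep n
      have hd : ∀ m, S n < m → m ≤ S (n+1) →
          sadicDigit 3 y m = if m ≤ S n + a then 0 else if m ≤ S n + a + b then 1 else 2 := by
        intro m hm1 hm2
        have h := hdig (n+1) (by omega) m (by simpa using hm1) hm2
        simp only [Nat.add_sub_cancel] at h
        exact h
      have hsplit : ∀ i, countDigit 3 y i (S (n+1)) = countDigit 3 y i (S n) +
          ((Finset.Ioc (S n) (S (n+1))).filter (fun m => sadicDigit 3 y m = i)).card := by
        intro i
        unfold countDigit
        have hIcc : ∀ k : ℕ, Finset.Icc 1 k = Finset.Ioc 0 k := fun k => by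
          rw [← Finset.Icc_add_one_left_eq_Ioc]; rfl
        rw [hIcc, hIcc, ← Finset.Ioc_union_Ioc_eq_Ioc (Nat.zero_le (S n)) (by omega : S n ≤ S (n+1)),
          Finset.filter_union,
          Finset.card_union_of_disjoint (Finset.disjoint_filter_filter (by
            rw [Finset.disjoint_left]
            intro x hx hx'
            simp only [Finset.mem_Ioc] at hx hx'
            omega))]
      have e0 : (Finset.Ioc (S n) (S (n+1))).filter (fun m => sadicDigit 3 y m = 0)
          = Finset.Ioc (S n) (S n + a) := by
        ext m
        simp only [Finset.mem_filter, Finset.mem_Ioc]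
        constructor
        · rintro ⟨⟨hm1, hm2⟩, hm3⟩
          refine ⟨hm1, ?_⟩
          by_contra hcon
          push_neg at hcon
          rw [hd m hm1 hm2, if_neg (by omega)] at hm3
          split_ifs at hm3 <;> omega
        · rintro ⟨hm1, hm2⟩
          have hm2' : m ≤ S (n+1) := by omega
          exact ⟨⟨hm1, hm2'⟩, by rw [hd m hm1 hm2', if_pos hm2]⟩
      have e1 : (Finset.Ioc (S n) (S (n+1))).filter (fun m => sadicDigit 3 y m = 1)
          = Finset.Ioc (S n + a) (S n + a + b) := by
        ext m
        simp only [Finset.mem_filter, Finset.mem_Ioc]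
        constructor
        · rintro ⟨⟨hm1, hm2⟩, hm3⟩
          rw [hd m hm1 hm2] at hm3
          split_ifs at hm3 <;> omega
        · rintro ⟨hm1, hm2⟩
          have hma : S n < m := by omega
          have hm2' : m ≤ S (n+1) := by omega
          refine ⟨⟨hma, hm2'⟩, ?_⟩
          rw [hd m hma hm2', if_neg (by omega), if_pos (by omega)]
      have e2 : (Finset.Ioc (S n) (S (n+1))).filter (fun m => sadicDigit 3 y m = 2)
          = Finset.Ioc (S n + a + b) (S (n+1)) := by
        ext m
        simp only [Finset.mem_filter, Finset.mem_Ioc]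
        constructor
        · rintro ⟨⟨hm1, hm2⟩, hm3⟩
          rw [hd m hm1 hm2] at hm3
          split_ifs at hm3 <;> omega
        · rintro ⟨hm1, hm2⟩
          have hma : S n < m := by omega
          refine ⟨⟨hma, hm2⟩, ?_⟩
          rw [hd m hma hm2, if_neg (by omega), if_neg (by omega)]
      refine ⟨?_, ?_, ?_⟩ <;>
        rw [Finset.sum_Icc_succ_top (by omega : 1 ≤ n + 1)]
      · rw [hsplit 0, e0, ih0, Nat.card_Ioc]; omega
      · rw [hsplit 1, e1, ih1, Nat.card_Ioc]; omega
      · rw [hsplit 2, e2, ih2, Nat.card_Ioc]; omega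
  -- per-term floor estimates
  have hfl : ∀ (τ:ℝ), 0 ≤ τ → ∀ j:ℕ,
      τ * j - 1 ≤ ((⌊τ * j⌋.toNat : ℕ):ℝ) ∧ ((⌊τ * j⌋.toNat : ℕ):ℝ) ≤ τ * j := by
    intro τ hτ j
    rw [toNat_floor_cast_aux τ hτ j]
    exact ⟨by linarith [Int.sub_one_lt_floor (τ * (j:ℝ))], Int.floor_le _⟩
  have hj3 : ∀ j : ℕ, τ₀*(j:ℝ) + τ₁*j + τ₂*j = j := by
    intro j
    rw [← add_mul, ← add_mul, hsum, one_mul]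
  -- sum bounds for the partial counts
  have hFub : ∀ (τ:ℝ), 0 ≤ τ → ∀ n:ℕ,
      ((∑ j ∈ Finset.Icc 1 n, ⌊τ * j⌋.toNat : ℕ):ℝ) ≤ τ*((n:ℝ)*((n:ℝ)+1)/2) := by
    intro τ hτ n
    rw [Nat.cast_sum]
    calc ∑ j ∈ Finset.Icc 1 n, ((⌊τ * j⌋.toNat : ℕ):ℝ)
        ≤ ∑ j ∈ Finset.Icc 1 n, τ*(j:ℝ) :=
          Finset.sum_le_sum (fun j _ => (hfl τ hτ j).2)
      _ = τ*((n:ℝ)*((n:ℝ)+1)/2) := by rw [← Finset.mul_sum, sum_Icc_cast_aux]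
  have hFlb : ∀ (τ:ℝ), 0 ≤ τ → ∀ n:ℕ,
      τ*((n:ℝ)*((n:ℝ)+1)/2) - n ≤ ((∑ j ∈ Finset.Icc 1 n, ⌊τ * j⌋.toNat : ℕ):ℝ) := by
    intro τ hτ n
    rw [Nat.cast_sum]
    calc τ*((n:ℝ)*((n:ℝ)+1)/2) - n = ∑ j ∈ Finset.Icc 1 n, (τ*(j:ℝ) - 1) := by
          rw [Finset.sum_sub_distrib, ← Finset.mul_sum, sum_Icc_cast_aux, Finset.sum_const,
            Nat.card_Icc]
          simp
      _ ≤ ∑ j ∈ Finset.Icc 1 n, ((⌊τ * j⌋.toNat : ℕ):ℝ) :=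
          Finset.sum_le_sum (fun j _ => (hfl τ hτ j).1)
  -- bounds for S
  have hSub' : ∀ n:ℕ, (S n : ℝ) ≤ (n:ℝ)*((n:ℝ)+1)/2 := by
    intro n
    rw [hS n, Nat.cast_sum]
    calc ∑ j ∈ Finset.Icc 1 n,
          ((⌊τ₀ * j⌋.toNat + ⌊τ₁ * j⌋.toNat + ⌊τ₂ * j⌋.toNat : ℕ):ℝ)
        ≤ ∑ j ∈ Finset.Icc 1 n, (j:ℝ) := by
          refine Finset.sum_le_sum (fun j _ => ?_)
          push_cast
          linarith [(hfl τ₀ h0 j).2, (hfl τ₁ h1 j).2, (hfl τ₂ h2 j).2, hj3 j]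
      _ = (n:ℝ)*((n:ℝ)+1)/2 := sum_Icc_cast_aux n
  have hSlb' : ∀ n:ℕ, (n:ℝ)*((n:ℝ)+1)/2 - 3*n ≤ S n := by
    intro n
    rw [hS n, Nat.cast_sum]
    calc (n:ℝ)*((n:ℝ)+1)/2 - 3*n = ∑ j ∈ Finset.Icc 1 n, ((j:ℝ) - 3) := by
          rw [Finset.sum_sub_distrib, sum_Icc_cast_aux, Finset.sum_const, Nat.card_Icc]
          simp; ring
      _ ≤ ∑ j ∈ Finset.Icc 1 n,
          ((⌊τ₀ * j⌋.toNat + ⌊τ₁ * j⌋.toNat + ⌊τ₂ * j⌋.toNat : ℕ):ℝ) := by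
          refine Finset.sum_le_sum (fun j _ => ?_)
          push_cast
          linarith [(hfl τ₀ h0 j).1, (hfl τ₁ h1 j).1, (hfl τ₂ h2 j).1, hj3 j]
  exact ⟨freq_aux τ₀ h0 hτ0le S hSmono hS0 hSlb' hSub' (countDigit 3 y 0) (hcmono 0)
      (fun n => ∑ j ∈ Finset.Icc 1 n, ⌊τ₀ * j⌋.toNat) (fun n => (hcount n).1)
      (hFlb τ₀ h0) (hFub τ₀ h0),
    freq_aux τ₁ h1 hτ1le S hSmono hS0 hSlb' hSub' (countDigit 3 y 1) (hcmono 1)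
      (fun n => ∑ j ∈ Finset.Icc 1 n, ⌊τ₁ * j⌋.toNat) (fun n => (hcount n).2.1)
      (hFlb τ₁ h1) (hFub τ₁ h1),
    freq_aux τ₂ h2 hτ2le S hSmono hS0 hSlb' hSub' (countDigit 3 y 2) (hcmono 2)
      (fun n => ∑ j ∈ Finset.Icc 1 n, ⌊τ₂ * j⌋.toNat) (fun n => (hcount n).2.2)
      (hFlb τ₂ h2) (hFub τ₂ h2)⟩
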